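/- Let T be a matrix-valued function, analytic in a neighborhood of 0 in ℂ with values in the d×d complex matrices, such that T(0) is real, symmetric (T(0)ᵀ = T(0)) and orthogonal (T(0)ᵀ T(0) = I). Let P := (1/2)(I − T(0)). Fix μ ∈ ℂ with μ ≠ 0 and a choice of square root √μ. Then there exist ε₀ > 0, C > 0, and matrix-valued functions A₁, A₂, B₁, B₂ on (0, ε₀] with operator norms ‖A₁(ε)‖, ‖A₂(ε)‖, ‖B₁(ε)‖, ‖B₂(ε)‖ ≤ C·ε, such that for every ε ∈ (0, ε₀] and all a, b ∈ ℂ^d the following are equivalent: (i) i·(I + T(ε√μ))·b − √μ·(I − T(ε√μ))·a = 0; (ii) P·a = A₁(ε)·a + A₂(ε)·b and (I − P)·b = B₁(ε)·a + B₂(ε)·b. -/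

import Mathlib

/-!
Write `T(ε√μ) = T(0) + R(ε)`. Since `T(0)² = 1`, `P = (1 - T(0))/2` is idempotent and
`1 + T(0) = 2(1 - P)`, `1 - T(0) = 2P`; applying `P` and `1 - P` to the gluing condition splits it
into `P a = ½ P R a + (i/2√μ) P R b` and `(1 - P) b = (i√μ/2)(1 - P) R a - ½ (1 - P) R b`.
The coefficients are fixed operators composed with `R(ε)`, and `‖R(ε)‖ = O(ε)` because `T` is
differentiable at `0`.
-/

open Matrix Filter Topology Asymptotics

section Reflection

variable {𝕜 A : Type*} [Field 𝕜] [Ring A] [Algebra 𝕜 A] {p t : A}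

lemma one_add_eq_of_two_smul_eq (hpt : (2 : 𝕜) • p = 1 - t) (t' : A) :
    1 + t' = (2 : 𝕜) • (1 - p) + (t' - t) := by
  rw [smul_sub, hpt, two_smul]
  abel

lemma one_sub_eq_of_two_smul_eq (hpt : (2 : 𝕜) • p = 1 - t) (t' : A) :
    1 - t' = (2 : 𝕜) • p - (t' - t) := by
  rw [hpt]
  abel

lemma isIdempotentElem_inv_two_smul_one_sub [NeZero (2 : 𝕜)] (ht : t * t = 1) :
    IsIdempotentElem ((2⁻¹ : 𝕜) • (1 - t)) := by
  have hsq : (1 - t) * (1 - t) = (2 : 𝕜) • (1 - t) := by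
    simp only [sub_mul, mul_sub, one_mul, mul_one, ht, two_smul]
    abel
  rw [IsIdempotentElem, smul_mul_smul_comm, hsq, smul_smul, mul_assoc, inv_mul_cancel₀ two_ne_zero,
    mul_one]

end Reflection

namespace Matrix

variable {n : Type*} [Fintype n] [DecidableEq n]

lemma eq_zero_iff_mulVec_eq_zero_and_one_sub_mulVec_eq_zero {R : Type*} [Ring R]
    (p : Matrix n n R) (v : n → R) : v = 0 ↔ p *ᵥ v = 0 ∧ (1 - p) *ᵥ v = 0 := by
  refine ⟨fun hv => by simp [hv], fun ⟨h₁, h₂⟩ => ?_⟩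
  rw [← one_mulVec v, ← add_sub_cancel p 1, add_mulVec, h₁, h₂, add_zero]

section Gluing

variable {𝕜 : Type*} [Field 𝕜] [NeZero (2 : 𝕜)] {p t : Matrix n n 𝕜}

lemma mulVec_gluing (hp : IsIdempotentElem p) (hpt : (2 : 𝕜) • p = 1 - t)
    {c s : 𝕜} (hs : s ≠ 0) (t' : Matrix n n 𝕜) (a b : n → 𝕜) :
    p *ᵥ (c • ((1 + t') *ᵥ b) - s • ((1 - t') *ᵥ a)) =
      (-(2 * s)) • (p *ᵥ a - (((2⁻¹ : 𝕜) • p * (t' - t)) *ᵥ a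
        + ((c / (2 * s)) • p * (t' - t)) *ᵥ b)) := by
  rw [one_add_eq_of_two_smul_eq hpt t', one_sub_eq_of_two_smul_eq hpt t']
  generalize t' - t = r
  have hb : p * ((2 : 𝕜) • (1 - p) + r) = p * r := by
    rw [mul_add, mul_smul_comm, hp.mul_one_sub_self, smul_zero, zero_add]
  have ha : p * ((2 : 𝕜) • p - r) = (2 : 𝕜) • p - p * r := by
    rw [mul_sub, mul_smul_comm, hp.eq]
  rw [mulVec_sub, mulVec_smul, mulVec_smul, mulVec_mulVec, mulVec_mulVec, hb, ha]
  simp only [sub_mulVec, smul_mulVec, smul_mul_assoc]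
  have h2 : (2 : 𝕜) ≠ 0 := two_ne_zero
  match_scalars <;> field_simp

lemma one_sub_mulVec_gluing (hp : IsIdempotentElem p) (hpt : (2 : 𝕜) • p = 1 - t)
    {c s : 𝕜} (hc : c ≠ 0) (t' : Matrix n n 𝕜) (a b : n → 𝕜) :
    (1 - p) *ᵥ (c • ((1 + t') *ᵥ b) - s • ((1 - t') *ᵥ a)) =
      (2 * c) • ((1 - p) *ᵥ b - (((-(s / (2 * c))) • (1 - p) * (t' - t)) *ᵥ a
        + ((-2⁻¹ : 𝕜) • (1 - p) * (t' - t)) *ᵥ b)) := by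
  rw [one_add_eq_of_two_smul_eq hpt t', one_sub_eq_of_two_smul_eq hpt t']
  generalize t' - t = r
  have hb : (1 - p) * ((2 : 𝕜) • (1 - p) + r) = (2 : 𝕜) • (1 - p) + (1 - p) * r := by
    rw [mul_add, mul_smul_comm, hp.one_sub.eq]
  have ha : (1 - p) * ((2 : 𝕜) • p - r) = -((1 - p) * r) := by
    rw [mul_sub, mul_smul_comm, hp.one_sub_mul_self, smul_zero, zero_sub]
  rw [mulVec_sub, mulVec_smul, mulVec_smul, mulVec_mulVec, mulVec_mulVec, hb, ha]
  simp only [add_mulVec, neg_mulVec, smul_mulVec, smul_mul_assoc]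
  have h2 : (2 : 𝕜) ≠ 0 := two_ne_zero
  match_scalars <;> field_simp

lemma gluing_eq_zero_iff (hp : IsIdempotentElem p) (hpt : (2 : 𝕜) • p = 1 - t)
    {c s : 𝕜} (hc : c ≠ 0) (hs : s ≠ 0) (t' : Matrix n n 𝕜) (a b : n → 𝕜) :
    c • ((1 + t') *ᵥ b) - s • ((1 - t') *ᵥ a) = 0 ↔
      (p *ᵥ a = (((2⁻¹ : 𝕜) • p * (t' - t)) *ᵥ a + ((c / (2 * s)) • p * (t' - t)) *ᵥ b) ∧
      ((1 - p) *ᵥ b = ((-(s / (2 * c))) • (1 - p) * (t' - t)) *ᵥ a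
        + ((-2⁻¹ : 𝕜) • (1 - p) * (t' - t)) *ᵥ b)) := by
  have h2 : (2 : 𝕜) ≠ 0 := two_ne_zero
  rw [eq_zero_iff_mulVec_eq_zero_and_one_sub_mulVec_eq_zero p, mulVec_gluing hp hpt hs,
    one_sub_mulVec_gluing hp hpt hc, smul_eq_zero_iff_right (neg_ne_zero.2 (mul_ne_zero h2 hs)),
    smul_eq_zero_iff_right (mul_ne_zero h2 hc), sub_eq_zero, sub_eq_zero]

end Gluing

variable (𝕜 : Type*) [NontriviallyNormedField 𝕜] [CompleteSpace 𝕜]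

noncomputable def toCLM : Matrix n n 𝕜 ≃ₐ[𝕜] ((n → 𝕜) →L[𝕜] (n → 𝕜)) :=
  toLinAlgEquiv'.trans (Module.End.toContinuousLinearMap (n → 𝕜))

@[simp] lemma toCLM_apply (M : Matrix n n 𝕜) (v : n → 𝕜) : toCLM 𝕜 M v = M *ᵥ v := rfl

variable {𝕜}

lemma differentiableAt_toCLM {E : Type*} [NormedAddCommGroup E] [NormedSpace 𝕜 E]
    {f : E → Matrix n n 𝕜} {x : E} (hf : ∀ i j, DifferentiableAt 𝕜 (fun z => f z i j) x) :
    DifferentiableAt 𝕜 (fun z => toCLM 𝕜 (f z)) x := by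
  have hsum : (fun z => toCLM 𝕜 (f z)) = fun z => ∑ i, ∑ j, f z i j • toCLM 𝕜 (single i j 1) := by
    funext z
    conv_lhs => rw [matrix_eq_sum_single (f z)]
    simp only [map_sum, ← map_smul, smul_single, smul_eq_mul, mul_one]
  rw [hsum]
  exact .fun_sum fun i _ => .fun_sum fun j _ => (hf i j).smul_const _

end Matrix

lemma DifferentiableAt.exists_norm_sub_le_on_ray {𝕜 F : Type*} [RCLike 𝕜] [NormedAddCommGroup F]
    [NormedSpace 𝕜 F] {f : 𝕜 → F} (hf : DifferentiableAt 𝕜 f 0) (s : 𝕜) :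
    ∃ K > 0, ∃ ε₀ > 0, ∀ ε ∈ Set.Ioc (0 : ℝ) ε₀, ‖f (ε * s) - f 0‖ ≤ K * ε := by
  have hray : Tendsto (fun ε : ℝ => (ε : 𝕜) * s) (𝓝 0) (𝓝 0) := by
    simpa using ((RCLike.continuous_ofReal (K := 𝕜)).tendsto 0).mul_const s
  have hO : (fun ε : ℝ => f (ε * s) - f 0) =O[𝓝 0] fun ε => ε :=
    (hf.isBigO_sub.comp_tendsto hray).trans (.of_bound ‖s‖ (.of_forall fun ε => by simp [mul_comm]))
  obtain ⟨K, hK, hKO⟩ := hO.exists_pos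
  obtain ⟨ε₀, hε₀, hsub⟩ := mem_nhdsGT_iff_exists_Ioc_subset.1 (nhdsWithin_le_nhds hKO.bound)
  refine ⟨K, hK, ε₀, hε₀, fun ε hε => ?_⟩
  simpa [_root_.abs_of_pos hε.1] using hsub hε

theorem gluing_condition_near_threshold_general
    (d : ℕ) (T : ℂ → Matrix (Fin d) (Fin d) ℂ)
    (hT : ∀ i j : Fin d, AnalyticAt ℂ (fun z => T z i j) 0)
    (hsym : (T 0)ᵀ = T 0) (horth : (T 0)ᵀ * T 0 = 1)
    (μ sqμ : ℂ) (hμ : μ ≠ 0) (hsqμ : sqμ ^ 2 = μ) :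
    let P : Matrix (Fin d) (Fin d) ℂ := (2⁻¹ : ℂ) • (1 - T 0)
    ∃ (ε₀ C : ℝ), 0 < ε₀ ∧ 0 < C ∧
      ∃ A₁ A₂ B₁ B₂ : ℝ → ((Fin d → ℂ) →L[ℂ] (Fin d → ℂ)),
        (∀ ε ∈ Set.Ioc (0 : ℝ) ε₀,
          ‖A₁ ε‖ ≤ C * ε ∧ ‖A₂ ε‖ ≤ C * ε ∧ ‖B₁ ε‖ ≤ C * ε ∧ ‖B₂ ε‖ ≤ C * ε) ∧
        ∀ ε ∈ Set.Ioc (0 : ℝ) ε₀, ∀ a b : Fin d → ℂ,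
          (Complex.I • ((1 + T ((ε : ℂ) * sqμ)) *ᵥ b)
              - sqμ • ((1 - T ((ε : ℂ) * sqμ)) *ᵥ a) = 0
            ↔ (P *ᵥ a = A₁ ε a + A₂ ε b ∧ (1 - P) *ᵥ b = B₁ ε a + B₂ ε b)) := by
  intro P
  have hs : sqμ ≠ 0 := by
    rintro rfl
    exact hμ (by simpa using hsqμ.symm)
  have hP : IsIdempotentElem P := isIdempotentElem_inv_two_smul_one_sub (by rwa [hsym] at horth)
  have hPT : (2 : ℂ) • P = 1 - T 0 := smul_inv_smul₀ two_ne_zero _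
  obtain ⟨K, hK, ε₀, hε₀, hR⟩ :=
    (differentiableAt_toCLM fun i j => (hT i j).differentiableAt).exists_norm_sub_le_on_ray sqμ
  let A (L : Matrix (Fin d) (Fin d) ℂ) (ε : ℝ) := toCLM ℂ (L * (T (ε * sqμ) - T 0))
  have hA (L) : ∀ ε ∈ Set.Ioc (0 : ℝ) ε₀, ‖A L ε‖ ≤ ‖toCLM ℂ L‖ * K * ε := fun ε hε => by
    simp only [A, mul_assoc, map_mul, map_sub]
    exact norm_mul_le_of_le le_rfl (hR ε hε)
  let L₁ := (2⁻¹ : ℂ) • P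
  let L₂ := (Complex.I / (2 * sqμ)) • P
  let L₃ := (-(sqμ / (2 * Complex.I))) • (1 - P)
  let L₄ := (-2⁻¹ : ℂ) • (1 - P)
  have hnorm (L : Matrix (Fin d) (Fin d) ℂ) := norm_nonneg (toCLM ℂ L)
  refine ⟨ε₀, (‖toCLM ℂ L₁‖ + ‖toCLM ℂ L₂‖ + ‖toCLM ℂ L₃‖ + ‖toCLM ℂ L₄‖ + 1) * K, hε₀,
    by positivity, A L₁, A L₂, A L₃, A L₄, fun ε hε => ?_,
    fun ε _ a b => gluing_eq_zero_iff hP hPT Complex.I_ne_zero hs _ a b⟩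
  refine ⟨(hA _ ε hε).trans ?_, (hA _ ε hε).trans ?_, (hA _ ε hε).trans ?_, (hA _ ε hε).trans ?_⟩
  all_goals gcongr <;> linarith [hnorm L₁, hnorm L₂, hnorm L₃, hnorm L₄, hε.1]

/-- matrix content of Lemma gcl0: if `T(z)` is analytic near `0` with
`T(0)` real, symmetric and orthogonal and `P = (1/2)(I - T(0))`, then for fixed `μ ≠ 0`
with square root `√μ`, there are `ε₀ > 0`, `C > 0` and operator families
`A₁, A₂, B₁, B₂` of norm `≤ Cε`, such that for all `ε ∈ (0, ε₀]` and all `a, b ∈ ℂ^d`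
the gluing condition `i(I + T(ε√μ))b - √μ(I - T(ε√μ))a = 0` is equivalent to
`P a = A₁(ε) a + A₂(ε) b` and `(I - P) b = B₁(ε) a + B₂(ε) b`. -/
theorem gluing_condition_near_threshold
    (d : ℕ) (T : ℂ → Matrix (Fin d) (Fin d) ℂ)
    (hT : ∀ i j : Fin d, AnalyticAt ℂ (fun z => T z i j) 0)
    (hreal : ∀ i j : Fin d, (T 0 i j).im = 0)
    (hsym : (T 0)ᵀ = T 0) (horth : (T 0)ᵀ * T 0 = 1)
    (μ sqμ : ℂ) (hμ : μ ≠ 0) (hsqμ : sqμ ^ 2 = μ) :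
    let P : Matrix (Fin d) (Fin d) ℂ := (2⁻¹ : ℂ) • (1 - T 0)
    ∃ (ε₀ C : ℝ), 0 < ε₀ ∧ 0 < C ∧
      ∃ A₁ A₂ B₁ B₂ : ℝ → ((Fin d → ℂ) →L[ℂ] (Fin d → ℂ)),
        (∀ ε ∈ Set.Ioc (0 : ℝ) ε₀,
          ‖A₁ ε‖ ≤ C * ε ∧ ‖A₂ ε‖ ≤ C * ε ∧ ‖B₁ ε‖ ≤ C * ε ∧ ‖B₂ ε‖ ≤ C * ε) ∧
        ∀ ε ∈ Set.Ioc (0 : ℝ) ε₀, ∀ a b : Fin d → ℂ,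
          (Complex.I • ((1 + T ((ε : ℂ) * sqμ)) *ᵥ b)
              - sqμ • ((1 - T ((ε : ℂ) * sqμ)) *ᵥ a) = 0
            ↔ (P *ᵥ a = A₁ ε a + A₂ ε b ∧ (1 - P) *ᵥ b = B₁ ε a + B₂ ε b)) :=
  gluing_condition_near_threshold_general d T hT hsym horth μ sqμ hμ hsqμ
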